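/- For all compact lists u, v ∈ L, the element u ↑̄ v of k⟨L⟩ is a k-linear combination of compact lists; consequently the k-submodule of k⟨L⟩ spanned by the compact lists is a unital subalgebra of (k⟨L⟩, ↑̄) with unit the empty list []. -/

import Mathlib

open scoped TensorProduct

/-- A monomial: a nonzero finitely supported multi-index with support contained in `{1,2,…}`. -/
def Mon : Type := {m : ℕ →₀ ℕ // m ≠ 0 ∧ m 0 = 0}

namespace Mon

/-- Product of monomials: pointwise addition of multi-indices. -/
noncomputable instance : Mul Mon :=
  ⟨fun a b =>
    ⟨a.1 + b.1, by
      constructor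
      · intro h
        exact a.2.1 ((add_eq_zero.mp h).1)
      · simp [Finsupp.add_apply, a.2.2, b.2.2]⟩⟩

/-- The total degree (weight) of a monomial. -/
def w (m : Mon) : ℕ := m.1.sum fun _ v => v

/-- The set of variable indices occurring in a list of monomials. -/
def IndAlph (l : List Mon) : Finset ℕ := (l.map fun m => m.1.support).foldr (· ∪ ·) ∅

/-- The maximal variable index occurring in a list of monomials (`0` for the empty list). -/
def maxInd (l : List Mon) : ℕ := (IndAlph l).sup id

/-- The embedding `i ↦ i + p` of `ℕ` into itself. -/
def addEmb (p : ℕ) : ℕ ↪ ℕ := ⟨fun i => i + p, fun a b h => by simpa using h⟩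

/-- The shift `T_p` of a monomial: translate the support by `p`. -/
noncomputable def Tmon (p : ℕ) (m : Mon) : Mon :=
  ⟨m.1.embDomain (addEmb p), by
    refine ⟨fun h => m.2.1 (Finsupp.embDomain_eq_zero.mp h), ?_⟩
    by_cases hp : p = 0
    · subst hp
      have h0 : (Finsupp.embDomain (addEmb 0) m.1) ((addEmb 0) 0) = m.1 0 :=
        Finsupp.embDomain_apply_self _ _ _
      simpa [addEmb] using h0.trans m.2.2
    · apply Finsupp.embDomain_notin_range
      rintro ⟨i, hi⟩
      simp only [addEmb, Function.Embedding.coeFn_mk] at hi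
      have hi' : i + p = 0 := hi
      omega⟩

/-- Shifted concatenation of lists of monomials. -/
noncomputable def sconc (l₁ l₂ : List Mon) : List Mon := l₁ ++ l₂.map (Tmon (maxInd l₁))

/-- A list of monomials is compact when its alphabet has no holes:
`IndAlph l = {1,…,card (IndAlph l)}`. -/
def Compact (l : List Mon) : Prop := IndAlph l = Finset.Icc 1 (IndAlph l).card

/-- The re-indexing function of a list `l` : on `IndAlph l` it is the unique strictly
increasing bijection onto `{1,…,card (IndAlph l)}` (extended injectively elsewhere). -/
noncomputable def phi (l : List Mon) (i : ℕ) : ℕ :=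
  if h : i ∈ IndAlph l then
    (((IndAlph l).orderIsoOfFin rfl).symm ⟨i, h⟩ : Fin (IndAlph l).card) + 1
  else i + (IndAlph l).card + 1

lemma phi_pos (l : List Mon) (i : ℕ) : 1 ≤ phi l i := by
  unfold phi; split_ifs <;> omega

lemma phi_inj (l : List Mon) : Function.Injective (phi l) := by
  intro a b hab
  unfold phi at hab
  split_ifs at hab with ha hb hb
  · have h1 : (((IndAlph l).orderIsoOfFin rfl).symm ⟨a, ha⟩) =
        (((IndAlph l).orderIsoOfFin rfl).symm ⟨b, hb⟩) := Fin.ext (by omega)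
    have h2 := congrArg ((IndAlph l).orderIsoOfFin rfl) h1
    rw [OrderIso.apply_symm_apply, OrderIso.apply_symm_apply] at h2
    exact congrArg Subtype.val h2
  · have := (((IndAlph l).orderIsoOfFin rfl).symm ⟨a, ha⟩).isLt; omega
  · have := (((IndAlph l).orderIsoOfFin rfl).symm ⟨b, hb⟩).isLt; omega
  · omega

/-- Action of the compacting operator of `l` on a single monomial. -/
noncomputable def cptMon (l : List Mon) (m : Mon) : Mon :=
  ⟨m.1.mapDomain (phi l), by
    constructor
    · intro h
      apply m.2.1
      exact Finsupp.mapDomain_injective (phi_inj l) (by simpa using h)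
    · apply Finsupp.mapDomain_notin_range
      rintro ⟨i, hi⟩
      have := phi_pos l i
      omega⟩

/-- The compacting operator on lists of monomials. -/
noncomputable def cpt (l : List Mon) : List Mon := l.map (cptMon l)

/-- `sub l I` is the sublist of `l` consisting of the entries whose (1-based) position
belongs to `I`. -/
def sub (l : List Mon) (I : Finset ℕ) : List Mon :=
  (List.range l.length).filterMap fun j => if j + 1 ∈ I then l[j]? else none

/-- `∗̄`-irreducible lists: nonempty and with no factorization into two nonempty lists. -/
def SIrred (l : List Mon) : Prop :=
  l ≠ [] ∧ ∀ u v : List Mon, l = sconc u v → u = [] ∨ v = []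

end Mon

/-- The free `k`-module on the set of lists of monomials. -/
abbrev FreeL (k : Type*) [CommRing k] : Type _ := (List Mon) →₀ k

/-- Weight of a list: sum of the weights of its entries. -/
def wl {A : Type*} (w : A → ℕ) (l : List A) : ℕ := (l.map w).sum

/-- The twisted law `↑` on basis lists, with crossing parameter `qc` and
superposition parameter `qs`. -/
noncomputable def tw {A : Type*} [Mul A] (k : Type*) [CommRing k] (qc qs : k) (w : A → ℕ) :
    List A → List A → (List A →₀ k)
  | u, [] => Finsupp.single u 1
  | [], b :: v => Finsupp.single (b :: v) 1
  | a :: u, b :: v =>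
      Finsupp.mapDomain (a :: ·) (tw k qc qs w u (b :: v))
        + qc ^ (wl w (a :: u) * w b) • Finsupp.mapDomain (b :: ·) (tw k qc qs w (a :: u) v)
        + (qc ^ (wl w u * w b) * qs ^ (w a * w b)) •
            Finsupp.mapDomain ((a * b) :: ·) (tw k qc qs w u v)
  termination_by u v => u.length + v.length
  decreasing_by all_goals simp <;> omega

/-- The bilinear extension of the twisted law `↑` to the free module on lists. -/
noncomputable def twL {A : Type*} [Mul A] (k : Type*) [CommRing k] (qc qs : k) (w : A → ℕ) :
    (List A →₀ k) →ₗ[k] (List A →₀ k) →ₗ[k] (List A →₀ k) :=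
  Finsupp.lift _ k _ fun u => Finsupp.lift _ k _ fun v => tw k qc qs w u v

/-- The deformed shifted law `↑̄` on basis lists: `u ↑̄ v = u ↑ T_{maxInd u} v`. -/
noncomputable def twbar (k : Type*) [CommRing k] (qc qs : k) (u v : List Mon) : FreeL k :=
  tw k qc qs Mon.w u (v.map (Mon.Tmon (Mon.maxInd u)))

/-- The bilinear extension of the deformed shifted law `↑̄` to the free module. -/
noncomputable def twbarL (k : Type*) [CommRing k] (qc qs : k) :
    FreeL k →ₗ[k] FreeL k →ₗ[k] FreeL k :=
  Finsupp.lift _ k _ fun u => Finsupp.lift _ k _ fun v => twbar k qc qs u v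

/-- The `k`-submodule of `k⟨L⟩` spanned by the compact lists. -/
noncomputable def CompSpan (k : Type*) [CommRing k] : Submodule k (FreeL k) :=
  Submodule.span k {x : FreeL k | ∃ l : List Mon, Mon.Compact l ∧ x = Finsupp.single l 1}

/-!
Every list occurring in `u ↑ v` is a shuffle of the entries of `u` and `v` in which some pairs
`a, b` are merged into `ab`, whose support is `supp a ∪ supp b`; hence its alphabet is
`IndAlph u ∪ IndAlph v`. For compact `u, v` with alphabets `{1,…,p}` and `{1,…,q}` we have
`maxInd u = p`, so `T_p v` has alphabet `{p+1,…,p+q}` and every list in `u ↑̄ v` has alphabet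
`{1,…,p+q}`. The span of the compact lists is the module of elements supported on compact lists,
so closure under the bilinear law `↑̄` reduces to basis lists.
-/

namespace Mon

lemma IndAlph_cons (a : Mon) (l : List Mon) : IndAlph (a :: l) = a.1.support ∪ IndAlph l := rfl

lemma support_mul (a b : Mon) : (a * b).1.support = a.1.support ∪ b.1.support :=
  Finsupp.support_add_eq_union

lemma IndAlph_map_Tmon (p : ℕ) (v : List Mon) :
    IndAlph (v.map (Tmon p)) = (IndAlph v).map (addEmb p) := by
  induction v with
  | nil => rfl
  | cons b v ih => rw [List.map_cons, IndAlph_cons, IndAlph_cons, ih, Finset.map_union]; rfl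

lemma Tmon_zero : Tmon 0 = id :=
  funext fun m => Subtype.ext (congrFun Finsupp.embDomain_refl m.1)

lemma maxInd_nil : maxInd [] = 0 := rfl

lemma compact_of_IndAlph_eq_Icc {l : List Mon} {n : ℕ} (h : IndAlph l = Finset.Icc 1 n) :
    Compact l := by
  rw [Compact, h, Nat.card_Icc, Nat.add_sub_cancel]

lemma compact_nil : Compact [] := compact_of_IndAlph_eq_Icc (n := 0) rfl

lemma maxInd_of_compact {l : List Mon} (hl : Compact l) : maxInd l = (IndAlph l).card := by
  have sup_Icc (n : ℕ) : (Finset.Icc 1 n).sup id = n := by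
    refine le_antisymm (Finset.sup_le fun i hi => (Finset.mem_Icc.mp hi).2) ?_
    rcases Nat.eq_zero_or_pos n with h | h
    · rw [h]; exact Nat.zero_le _
    · exact Finset.le_sup (f := id) (Finset.mem_Icc.mpr ⟨h, le_rfl⟩)
  rw [maxInd, hl, sup_Icc, Nat.card_Icc, Nat.add_sub_cancel]

lemma IndAlph_map_Tmon_of_compact {v : List Mon} (hv : Compact v) (p : ℕ) :
    IndAlph (v.map (Tmon p)) = Finset.Icc (1 + p) ((IndAlph v).card + p) := by
  rw [IndAlph_map_Tmon, hv, Nat.card_Icc, Nat.add_sub_cancel, ← Finset.map_add_right_Icc]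
  rfl

end Mon

open Mon

section TwistedLaw

variable {k : Type*} [CommRing k] {qc qs : k}

lemma IndAlph_of_mem_support_mapDomain_cons {f : FreeL k} {s : Finset ℕ}
    (hf : ∀ l ∈ f.support, IndAlph l = s) (c : Mon) :
    ∀ l ∈ (f.mapDomain (c :: ·)).support, IndAlph l = c.1.support ∪ s := by
  classical
  intro l hl
  obtain ⟨l', hl', rfl⟩ := Finset.mem_image.mp (Finsupp.mapDomain_support hl)
  rw [IndAlph_cons, hf l' hl']

lemma IndAlph_of_mem_support_tw :
    ∀ u v : List Mon, ∀ l ∈ (tw k qc qs Mon.w u v).support, IndAlph l = IndAlph u ∪ IndAlph v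
  | u, [] => by
      intro l hl
      rw [tw] at hl
      rw [Finset.mem_singleton.mp (Finsupp.support_single_subset hl)]
      exact (Finset.union_empty _).symm
  | [], b :: v => by
      intro l hl
      rw [tw] at hl
      rw [Finset.mem_singleton.mp (Finsupp.support_single_subset hl)]
      exact (Finset.empty_union _).symm
  | a :: u, b :: v => by
      classical
      have left := IndAlph_of_mem_support_mapDomain_cons
        (IndAlph_of_mem_support_tw u (b :: v)) a
      have right := IndAlph_of_mem_support_mapDomain_cons
        (IndAlph_of_mem_support_tw (a :: u) v) b
      have merged := IndAlph_of_mem_support_mapDomain_cons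
        (IndAlph_of_mem_support_tw u v) (a * b)
      intro l hl
      rw [tw] at hl
      simp only [IndAlph_cons, support_mul] at left right merged ⊢
      rcases Finset.mem_union.mp (Finsupp.support_add hl) with h | h
      · rcases Finset.mem_union.mp (Finsupp.support_add h) with h | h
        · rw [left l h]; ac_rfl
        · rw [right l (Finsupp.support_smul h)]; ac_rfl
      · rw [merged l (Finsupp.support_smul h)]; ac_rfl
  termination_by u v => u.length + v.length
  decreasing_by all_goals simp <;> omega

lemma compact_of_mem_support_twbar {u v : List Mon} (hu : Compact u) (hv : Compact v) :
    ∀ l ∈ (twbar k qc qs u v).support, Compact l := by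
  intro l hl
  apply compact_of_IndAlph_eq_Icc (n := (IndAlph u).card + (IndAlph v).card)
  rw [IndAlph_of_mem_support_tw _ _ l hl, IndAlph_map_Tmon_of_compact hv, maxInd_of_compact hu, hu]
  ext i
  simp only [Finset.mem_union, Finset.mem_Icc, Nat.card_Icc]
  omega

lemma twbar_nil_left (v : List Mon) : twbar k qc qs [] v = Finsupp.single v 1 := by
  rw [twbar, maxInd_nil, Tmon_zero, List.map_id]
  cases v <;> rw [tw]

lemma twbar_nil_right (u : List Mon) : twbar k qc qs u [] = Finsupp.single u 1 := by
  rw [twbar, List.map_nil, tw]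

lemma twbarL_single (u v : List Mon) (a c : k) :
    twbarL k qc qs (Finsupp.single u a) (Finsupp.single v c) = (a * c) • twbar k qc qs u v := by
  simp [twbarL, Finsupp.lift_apply, Finsupp.sum_single_index, mul_smul]

lemma twbarL_single_nil_left : twbarL k qc qs (Finsupp.single [] 1) = LinearMap.id := by
  refine Finsupp.lhom_ext fun v c => ?_
  rw [twbarL_single, twbar_nil_left, one_mul, Finsupp.smul_single, smul_eq_mul, mul_one]
  rfl

lemma twbarL_single_nil_right : (twbarL k qc qs).flip (Finsupp.single [] 1) = LinearMap.id := by
  refine Finsupp.lhom_ext fun u c => ?_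
  rw [LinearMap.flip_apply, twbarL_single, twbar_nil_right, mul_one, Finsupp.smul_single,
    smul_eq_mul, mul_one]
  rfl

end TwistedLaw

lemma compSpan_eq_supported (k : Type*) [CommRing k] :
    CompSpan k = Finsupp.supported k k {l | Compact l} := by
  rw [Finsupp.supported_eq_span_single, CompSpan]
  congr 1
  ext x
  exact ⟨fun ⟨l, hl, hx⟩ => ⟨l, hl, hx.symm⟩, fun ⟨l, hl, hx⟩ => ⟨l, hl, hx.symm⟩⟩

lemma twbarL_mem_compSpan {k : Type*} [CommRing k] (qc qs : k) {x y : FreeL k}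
    (hx : x ∈ CompSpan k) (hy : y ∈ CompSpan k) : twbarL k qc qs x y ∈ CompSpan k := by
  refine Submodule.map₂_le.mp ?_ x hx y hy
  rw [CompSpan, Submodule.map₂_span_span, Submodule.span_le]
  rintro _ ⟨_, ⟨u, hu, rfl⟩, _, ⟨v, hv, rfl⟩, rfl⟩
  show twbarL k qc qs (Finsupp.single u 1) (Finsupp.single v 1) ∈ CompSpan k
  rw [twbarL_single, compSpan_eq_supported]
  exact Submodule.smul_mem _ _
    ((Finsupp.mem_supported k _).mpr fun l hl => compact_of_mem_support_twbar hu hv l hl)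

/-- ** Statement 17 **: the deformed shifted product of two compact lists is a linear
combination of compact lists; consequently the span of the compact lists is a unital
subalgebra of `(k⟨L⟩, ↑̄)` with unit the empty list. -/
theorem compact_span_subalgebra (k : Type*) [CommRing k] (qc qs : k) :
    (∀ u v : List Mon, Mon.Compact u → Mon.Compact v →
        ∀ l ∈ (twbar k qc qs u v).support, Mon.Compact l) ∧
    Finsupp.single ([] : List Mon) (1 : k) ∈ CompSpan k ∧
    (∀ x ∈ CompSpan k, ∀ y ∈ CompSpan k, twbarL k qc qs x y ∈ CompSpan k) ∧
    (∀ x ∈ CompSpan k,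
        twbarL k qc qs (Finsupp.single [] 1) x = x ∧
        twbarL k qc qs x (Finsupp.single [] 1) = x) :=
  ⟨fun _ _ hu hv => compact_of_mem_support_twbar hu hv,
    Submodule.subset_span ⟨[], compact_nil, rfl⟩,
    fun _ hx _ hy => twbarL_mem_compSpan qc qs hx hy,
    fun x _ => ⟨LinearMap.congr_fun twbarL_single_nil_left x,
      LinearMap.congr_fun twbarL_single_nil_right x⟩⟩
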